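/- arXiv:1212.2314 — 2 statements merged into one kernel-verified Lean document; each statement's English description precedes it below -/
import Mathlib

section
/- The containment relation on hypergraphs is a partial order: it is reflexive, antisymmetric, and transitive. (Consequently, proper containment is a strict partial order on hypergraphs.) -/
/-- A hypergraph, identified (as in the paper) with its finite set of
finite hyperedges; its nodes are the vertices occurring in some hyperedge. -/
structure HGraph (α : Type*) where
  edges : Finset (Finset α)

namespace HGraph

variable {α : Type*}

/-- The set of nodes of a hypergraph. -/
def nodes (H : HGraph α) : Set α := {x | ∃ h ∈ H.edges, x ∈ h}

/-- `H1 ≤ H2`: every hyperedge of `H1` is contained in some hyperedge of `H2`. -/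
def HLe (H1 H2 : HGraph α) : Prop := ∀ h1 ∈ H1.edges, ∃ h2 ∈ H2.edges, h1 ⊆ h2

/-- `H` is contained in `H'`. -/
def Contained (H H' : HGraph α) : Prop :=
  ∀ h ∈ H.edges, h ∉ H'.edges → ∃ h' ∈ H'.edges, h' ∉ H.edges ∧ h ⊆ h'

/-- `H` is properly contained in `H'`. -/
def ProperlyContained (H H' : HGraph α) : Prop := H.Contained H' ∧ H ≠ H'

/-- A hypergraph is reduced if no hyperedge is a proper subset of another one. -/
def Reduced (H : HGraph α) : Prop := ∀ h ∈ H.edges, ∀ h' ∈ H.edges, ¬ h ⊂ h'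

end HGraph

/-- The type of hyperedges of `H`. -/
abbrev Hyperedge {α : Type*} (H : HGraph α) := {h : Finset α // h ∈ H.edges}

/-- A join tree for a hypergraph `H`: a tree whose vertices are the hyperedges of `H`
such that, for every node `X`, the hyperedges containing `X` induce a connected subtree. -/
structure JoinTree {α : Type*} (H : HGraph α) where
  T : SimpleGraph (Hyperedge H)
  isTree : T.IsTree
  node_connected : ∀ X : α, (T.induce {h : Hyperedge H | X ∈ h.1}).Preconnected

/-- A hypergraph is acyclic iff it has a join tree. -/
def HGraph.Acyclic {α : Type*} (H : HGraph α) : Prop := Nonempty (JoinTree H)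

/-- `Ha` is a tree projection of `H1` w.r.t. `H2`. -/
def IsTreeProjection {α : Type*} (H1 H2 Ha : HGraph α) : Prop :=
  Ha.Acyclic ∧ H1.HLe Ha ∧ Ha.HLe H2

/-- `Ha` is a minimal tree projection of `H1` w.r.t. `H2`. -/
def IsMinimalTreeProjection {α : Type*} (H1 H2 Ha : HGraph α) : Prop :=
  IsTreeProjection H1 H2 Ha ∧
  ∀ Ha' : HGraph α, IsTreeProjection H1 H2 Ha' → ¬ Ha'.ProperlyContained Ha

namespace HGraph

variable {α : Type*}

/-- `X` is `[V]`-adjacent to `Y`: some hyperedge contains both outside of `V`. -/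
def Adj (H : HGraph α) (V : Set α) (X Y : α) : Prop :=
  ∃ h ∈ H.edges, X ∈ h ∧ Y ∈ h ∧ X ∉ V ∧ Y ∉ V

/-- There is a `[V]`-path from `X` to `Y`. -/
def VPath (H : HGraph α) (V : Set α) : α → α → Prop :=
  Relation.ReflTransGen (H.Adj V)

/-- The set `W` is `[V]`-connected. -/
def VConnected (H : HGraph α) (V W : Set α) : Prop :=
  ∀ X ∈ W, ∀ Y ∈ W, H.VPath V X Y

/-- `C` is a `[V]`-component of `H`: a maximal `[V]`-connected nonempty subset
of `nodes(H) \ V`. -/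
def IsComponent (H : HGraph α) (V C : Set α) : Prop :=
  C.Nonempty ∧ C ⊆ H.nodes \ V ∧ H.VConnected V C ∧
  ∀ C' : Set α, C ⊆ C' → C' ⊆ H.nodes \ V → H.VConnected V C' → C' = C

/-- The frontier `Fr(C,H)`: the union of all hyperedges meeting `C`. -/
def Fr (H : HGraph α) (C : Set α) : Set α :=
  {x | ∃ h ∈ H.edges, x ∈ h ∧ ∃ y ∈ C, y ∈ h}

/-- The border `∂(C,H) = Fr(C,H) \ C`. -/
def border (H : HGraph α) (C : Set α) : Set α := H.Fr C \ C

/-- `X` `[V]`-touches the set `W`: `X` is `[∅]`-adjacent to some node `Z` from which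
there is a `[V]`-path to some node of `W`. -/
def Touches (H : HGraph α) (V : Set α) (X : α) (W : Set α) : Prop :=
  ∃ Z : α, H.Adj ∅ X Z ∧ ∃ Y ∈ W, H.VPath V Z Y

end HGraph

namespace JoinTree

variable {α : Type*} {H : HGraph α}

/-- The vertices of the subtree rooted at `h_s` when the join tree is rooted at
(the side of) `h_r`, for adjacent vertices `h_r`, `h_s`. -/
def subtreeVerts (JT : JoinTree H) (h_r h_s : Hyperedge H) : Set (Hyperedge H) :=
  {v | JT.T.dist v h_s < JT.T.dist v h_r}

/-- The nodes occurring in the vertices of the subtree rooted at `h_s` (w.r.t. `h_r`). -/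
def subtreeNodes (JT : JoinTree H) (h_r h_s : Hyperedge H) : Set α :=
  {x | ∃ v ∈ JT.subtreeVerts h_r h_s, x ∈ v.1}

/-- `h_s` is a child of `h_r` in the join tree rooted at `root`. -/
def IsChild (JT : JoinTree H) (root h_r h_s : Hyperedge H) : Prop :=
  JT.T.Adj h_r h_s ∧ JT.T.dist root h_r < JT.T.dist root h_s

end JoinTree

/-- The sub-hypergraph of `H1` induced by the node set `N` is `[∅]`-connected. -/
def InducedConn {α : Type*} (H1 : HGraph α) (N : Set α) : Prop :=
  ∀ X ∈ N, ∀ Y ∈ N,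
    Relation.ReflTransGen
      (fun a b => a ∈ N ∧ b ∈ N ∧ ∃ h ∈ H1.edges, a ∈ h ∧ b ∈ h) X Y

/-- A join tree of `Ha` is `H1`-connected. -/
def JoinTree.IsConnectedFor {α : Type*} {Ha : HGraph α} (JT : JoinTree Ha)
    (H1 : HGraph α) : Prop :=
  ∀ h_r h_s : Hyperedge Ha, JT.T.Adj h_r h_s → InducedConn H1 (JT.subtreeNodes h_r h_s)

/-- `C` is the component `C⊤(h)` associated with vertex `h` of the join tree rooted at
`root`: conventionally `nodes(H1)` for the root, and otherwise the unique
`[h_p]`-component of `H1` (for `h_p` the parent of `h`) determined by the subtree at `h`. -/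
def CtopAt {α : Type*} (H1 : HGraph α) {Ha : HGraph α} (JT : JoinTree Ha)
    (root h : Hyperedge Ha) (C : Set α) : Prop :=
  (h = root ∧ C = H1.nodes) ∨
  ∃ h_p : Hyperedge Ha, JT.IsChild root h_p h ∧ H1.IsComponent (h_p.1 : Set α) C ∧
    JT.subtreeNodes h_p h = C ∪ ((h.1 : Set α) ∩ (h_p.1 : Set α))

/-- The join tree `JT` of `Ha`, rooted at `root`, is an `H1`-component tree. -/
def JoinTree.IsComponentTreeFor {α : Type*} {Ha : HGraph α} (JT : JoinTree Ha)
    (H1 : HGraph α) (root : Hyperedge Ha) : Prop :=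
  (∀ h_r h_s : Hyperedge Ha, JT.IsChild root h_r h_s →
    (∃! C : Set α, H1.IsComponent (h_r.1 : Set α) C ∧
      JT.subtreeNodes h_r h_s = C ∪ ((h_s.1 : Set α) ∩ (h_r.1 : Set α))) ∧
    (∀ C : Set α, H1.IsComponent (h_r.1 : Set α) C →
      JT.subtreeNodes h_r h_s = C ∪ ((h_s.1 : Set α) ∩ (h_r.1 : Set α)) →
      ((h_s.1 : Set α) ∩ C).Nonempty ∧ (h_s.1 : Set α) ⊆ H1.Fr C)) ∧
  (∀ h_r : Hyperedge Ha, ∀ Ctop : Set α, CtopAt H1 JT root h_r Ctop →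
    ∀ C_r : Set α, H1.IsComponent (h_r.1 : Set α) C_r → C_r ⊆ Ctop →
    ∃! h_s : Hyperedge Ha, JT.IsChild root h_r h_s ∧
      JT.subtreeNodes h_r h_s = C_r ∪ ((h_s.1 : Set α) ∩ (h_r.1 : Set α)))

/-! ### The Robber and Captain game -/

/-- A position for the Captain: a set of nodes included in some hyperedge of `H2`. -/
def IsPosition {α : Type*} (H2 : HGraph α) (M : Set α) : Prop :=
  ∃ h2 ∈ H2.edges, M ⊆ (h2 : Set α)

/-- A configuration of the game `R&C(H1,H2)`. -/
def IsConfig {α : Type*} (H1 H2 : HGraph α) (M C : Set α) : Prop :=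
  IsPosition H2 M ∧ (H1.IsComponent M C ∨ C = ∅ ∨ (M = ∅ ∧ C = H1.nodes))

/-- `C_j` is an `[(M_i,C_i),M_j]`-escape component: an `[M_j]`-component of `H1`
such that `C_i ∪ C_j` is `[M_i ∩ M_j]`-connected. -/
def EscapeComp {α : Type*} (H1 : HGraph α) (M_i C_i M_j C_j : Set α) : Prop :=
  H1.IsComponent M_j C_j ∧ H1.VConnected (M_i ∩ M_j) (C_i ∪ C_j)

/-- The escape door `ED((M_i,C),M') = ∂(C,H1) \ M'` (it only depends on `C` and `M'`). -/
def escapeDoor {α : Type*} (H1 : HGraph α) (C M' : Set α) : Set α :=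
  H1.border C \ M'

/-- `σ` is a strategy for the Captain in `R&C(H1,H2)`. -/
def IsStrategy {α : Type*} (H1 H2 : HGraph α) (σ : Set α → Set α → Set α) : Prop :=
  ∀ M C : Set α, IsConfig H1 H2 M C → C ≠ ∅ →
    IsPosition H2 (σ M C) ∧ σ M C ⊆ H1.Fr C

/-- One step of the game played according to `σ`: from configuration `p` the Captain
moves to `σ p.1 p.2`, and the Robber either selects an escape component or is captured. -/
def GameStep {α : Type*} (H1 : HGraph α) (σ : Set α → Set α → Set α)
    (p q : Set α × Set α) : Prop :=
  p.2 ≠ ∅ ∧ q.1 = σ p.1 p.2 ∧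
    (EscapeComp H1 p.1 p.2 q.1 q.2 ∨
      ((∀ C : Set α, ¬ EscapeComp H1 p.1 p.2 q.1 C) ∧ q.2 = ∅))

/-- `p` is a vertex of the game tree `T(σ)` (reachable from the root `(∅, nodes(H1))`). -/
def InGameTree {α : Type*} (H1 : HGraph α) (σ : Set α → Set α → Set α)
    (p : Set α × Set α) : Prop :=
  Relation.ReflTransGen (GameStep H1 σ) (∅, H1.nodes) p

/-- `σ` is winning: the game tree `T(σ)` is finite, i.e., there is no infinite play. -/
def Winning {α : Type*} (H1 : HGraph α) (σ : Set α → Set α → Set α) : Prop :=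
  ¬ ∃ f : ℕ → Set α × Set α, f 0 = (∅, H1.nodes) ∧ ∀ n, GameStep H1 σ (f n) (f (n + 1))

/-- `M_j` is a monotone move in `(M_i, C_i)`. -/
def MonotoneMove {α : Type*} (H1 : HGraph α) (M_i C_i M_j : Set α) : Prop :=
  ∀ C : Set α, EscapeComp H1 M_i C_i M_j C → C ⊆ C_i

/-- `σ` is a monotone strategy. -/
def MonotoneStrategy {α : Type*} (H1 : HGraph α) (σ : Set α → Set α → Set α) : Prop :=
  ∀ p q : Set α × Set α, InGameTree H1 σ p → GameStep H1 σ p q →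
    MonotoneMove H1 p.1 p.2 q.1


namespace HGraph

variable {α : Type*} {H H' H'' : HGraph α}

theorem Contained.exists_ssuperset (hc : H.Contained H') {h : Finset α} (hH : h ∈ H.edges)
    (hH' : h ∉ H'.edges) : ∃ h' ∈ H'.edges, h' ∉ H.edges ∧ h ⊂ h' := by
  obtain ⟨h', hh'H', hh'H, hhh'⟩ := hc h hH hH'
  exact ⟨h', hh'H', hh'H, hhh'.ssubset_of_ne (ne_of_mem_of_not_mem hH hh'H)⟩

theorem contained_refl (H : HGraph α) : H.Contained H :=
  fun _ hH hH' => absurd hH hH'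

theorem Contained.antisymm (h₁ : H.Contained H') (h₂ : H'.Contained H) : H = H' := by
  classical
  -- a maximal edge of the symmetric difference would have a strict superset in it
  suffices symmDiff H.edges H'.edges = ∅ by
    cases H; cases H'
    simpa using this
  by_contra hne
  obtain ⟨g, hg⟩ := Finset.exists_maximal (Finset.nonempty_iff_ne_empty.2 hne)
  rcases Finset.mem_symmDiff.1 hg.prop with ⟨hgH, hgH'⟩ | ⟨hgH', hgH⟩
  · obtain ⟨g', hg'H', hg'H, hgg'⟩ := h₁.exists_ssuperset hgH hgH'
    exact hg.not_gt (Finset.mem_symmDiff.2 (Or.inr ⟨hg'H', hg'H⟩)) hgg'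
  · obtain ⟨g', hg'H, hg'H', hgg'⟩ := h₂.exists_ssuperset hgH' hgH
    exact hg.not_gt (Finset.mem_symmDiff.2 (Or.inl ⟨hg'H, hg'H'⟩)) hgg'

theorem Contained.trans (h₁ : H.Contained H') (h₂ : H'.Contained H'') : H.Contained H'' := by
  classical
  intro h hH hH''
  set S := (H.edges ∪ H'.edges ∪ H''.edges) \ (H.edges ∩ H'.edges ∩ H''.edges)
  -- a maximal edge of `S` above `h` can be pushed up neither from `H` nor from `H'`,
  -- so it lies in `H'' \ H`
  obtain ⟨g, hhg, hg⟩ := S.exists_le_maximal (a := h) (by simp [S, hH, hH''])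
  have hgH' (hgH : g ∈ H.edges) : g ∈ H'.edges := by
    by_contra hgH'
    obtain ⟨g', hg'H', hg'H, hgg'⟩ := h₁.exists_ssuperset hgH hgH'
    exact hg.not_gt (by simp [S, hg'H', hg'H]) hgg'
  have hgH'' (hgH' : g ∈ H'.edges) : g ∈ H''.edges := by
    by_contra hgH''
    obtain ⟨g', hg'H'', hg'H', hgg'⟩ := h₂.exists_ssuperset hgH' hgH''
    exact hg.not_gt (by simp [S, hg'H'', hg'H']) hgg'
  have hgS := hg.prop
  simp only [S, Finset.mem_sdiff, Finset.mem_union, Finset.mem_inter] at hgS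
  exact ⟨g, by tauto, by tauto, hhg⟩

instance : PartialOrder (HGraph α) where
  le := Contained
  le_refl := contained_refl
  le_trans _ _ _ := Contained.trans
  le_antisymm _ _ := Contained.antisymm

theorem le_iff_contained : H ≤ H' ↔ H.Contained H' := Iff.rfl

theorem properlyContained_iff_lt : H.ProperlyContained H' ↔ H < H' := by
  rw [lt_iff_le_and_ne, le_iff_contained]
  rfl

end HGraph

theorem containment_is_partial_order (α : Type*) :
    (∀ H : HGraph α, H.Contained H) ∧
    (∀ H H' : HGraph α, H.Contained H' → H'.Contained H → H = H') ∧
    (∀ H H' H'' : HGraph α, H.Contained H' → H'.Contained H'' → H.Contained H'') ∧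
    (∀ H : HGraph α, ¬ H.ProperlyContained H) ∧
    (∀ H H' H'' : HGraph α,
      H.ProperlyContained H' → H'.ProperlyContained H'' → H.ProperlyContained H'') := by
  simp only [← HGraph.le_iff_contained, HGraph.properlyContained_iff_lt]
  exact ⟨le_refl, fun _ _ => le_antisymm, fun _ _ _ => le_trans, lt_irrefl,
    fun _ _ _ => lt_trans⟩
end

section
/- Let H1 and Ha be two hypergraphs with the same set of nodes such that H1 ≤ Ha. Then, for each hyperedge h ∈ edges(Ha) and each [h]-component Ca of Ha, there are [h]-components C1^1, ..., C1^n of H1 such that Ca is the union of C1^1, ..., C1^n. -/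
/-! Every `[h]`-path of `H1` is an `[h]`-path of `Ha`, so the `[h]`-component of `H1` through a
node of `Ca` stays inside `Ca`. Hence `Ca` is the union of the `H1`-components of its nodes. -/

namespace HGraph

variable {α : Type*} {H : HGraph α} {V : Set α} {x y z : α}

theorem Adj.symm (hxy : H.Adj V x y) : H.Adj V y x :=
  let ⟨e, he, hx, hy, hxV, hyV⟩ := hxy
  ⟨e, he, hy, hx, hyV, hxV⟩

theorem Adj.mem_nodes_diff (hxy : H.Adj V x y) : y ∈ H.nodes \ V :=
  let ⟨e, he, _, hy, _, hyV⟩ := hxy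
  ⟨⟨e, he, hy⟩, hyV⟩

theorem Adj.mono {H' : HGraph α} (hle : H.HLe H') (hxy : H.Adj V x y) : H'.Adj V x y :=
  let ⟨e, he, hx, hy, hxV, hyV⟩ := hxy
  let ⟨e', he', hee'⟩ := hle e he
  ⟨e', he', hee' hx, hee' hy, hxV, hyV⟩

namespace VPath

theorem refl (x : α) : H.VPath V x x := Relation.ReflTransGen.refl

theorem trans (hxy : H.VPath V x y) (hyz : H.VPath V y z) : H.VPath V x z :=
  Relation.ReflTransGen.trans hxy hyz

theorem symm (hxy : H.VPath V x y) : H.VPath V y x :=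
  have : Std.Symm (H.Adj V) := ⟨fun _ _ => Adj.symm⟩
  Std.Symm.symm (r := Relation.ReflTransGen (H.Adj V)) _ _ hxy

theorem mono {H' : HGraph α} (hle : H.HLe H') (hxy : H.VPath V x y) : H'.VPath V x y :=
  Relation.ReflTransGen.mono (fun _ _ => Adj.mono hle) _ _ hxy

theorem mem_nodes_diff (hx : x ∈ H.nodes \ V) (hxy : H.VPath V x y) : y ∈ H.nodes \ V := by
  rcases Relation.ReflTransGen.cases_tail hxy with rfl | ⟨_, _, hadj⟩
  · exact hx
  · exact hadj.mem_nodes_diff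

end VPath

def componentOf (H : HGraph α) (V : Set α) (x : α) : Set α := {y | H.VPath V x y}

theorem mem_componentOf_self : x ∈ H.componentOf V x := VPath.refl x

theorem vConnected_componentOf : H.VConnected V (H.componentOf V x) :=
  fun _ hy _ hz => hy.symm.trans hz

theorem isComponent_componentOf (hx : x ∈ H.nodes \ V) : H.IsComponent V (H.componentOf V x) :=
  ⟨⟨x, mem_componentOf_self⟩, fun _ => VPath.mem_nodes_diff hx, vConnected_componentOf,
    fun _ hsub _ hconn =>
      Set.Subset.antisymm (fun _ hy => hconn x (hsub mem_componentOf_self) _ hy) hsub⟩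

theorem VConnected.union_componentOf {C : Set α} (hC : H.VConnected V C) (hx : x ∈ C) :
    H.VConnected V (C ∪ H.componentOf V x) := by
  have hfrom_x : ∀ y ∈ C ∪ H.componentOf V x, H.VPath V x y := by
    rintro y (hy | hy)
    exacts [hC x hx y hy, hy]
  exact fun y hy z hz => (hfrom_x y hy).symm.trans (hfrom_x z hz)

theorem IsComponent.mem_of_vPath {C : Set α} (hC : H.IsComponent V C) (hx : x ∈ C)
    (hxy : H.VPath V x y) : y ∈ C := by
  obtain ⟨_, hsub, hconn, hmax⟩ := hC
  have hunion : C ∪ H.componentOf V x = C :=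
    hmax _ Set.subset_union_left
      (Set.union_subset hsub fun _ => VPath.mem_nodes_diff (hsub hx))
      (hconn.union_componentOf hx)
  exact hunion ▸ Or.inr hxy

end HGraph

theorem component_is_union {α : Type*} (H1 Ha : HGraph α)
    (hnodes : H1.nodes = Ha.nodes) (hle : H1.HLe Ha) :
    ∀ h ∈ Ha.edges, ∀ Ca : Set α, Ha.IsComponent (h : Set α) Ca →
      ∃ S : Set (Set α), (∀ C ∈ S, H1.IsComponent (h : Set α) C) ∧ Ca = ⋃₀ S := by
  intro h _ Ca hCa
  refine ⟨H1.componentOf h '' Ca, ?_, ?_⟩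
  · rintro _ ⟨x, hx, rfl⟩
    exact HGraph.isComponent_componentOf (hnodes ▸ hCa.2.1 hx)
  · ext y
    constructor
    · exact fun hy => ⟨_, ⟨y, hy, rfl⟩, HGraph.mem_componentOf_self⟩
    · rintro ⟨_, ⟨x, hx, rfl⟩, hxy⟩
      exact hCa.mem_of_vPath hx (hxy.mono hle)
end
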